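/- With L_{2n} defined as L_{2n} = (1/2)Σ_{j∈ℤ}(−1)^{j−1}:J_{−j}J_{2n+j}: + (ħ/4)δ_{n,0} + (1/2)Σ_{j∈ℤ}(−1)^j(n+j):Γ_{−j}Γ_{j+2n}: acting on ℂ[x¹,x²,...] ⊗ Λ[θ⁰,θ¹,...], one has for all n ≥ −1 and i ≥ 1: [L_{2n}, Γ_{2i−1}] = (n + 2i − 1)·ħ·Γ_{2n+2i−1}. -/
import Mathlib


/-- The Heisenberg operators on `ℂ[x¹, x², ...]`: `J_a = ℏ·∂/∂x^a` for `a > 0`,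
`J_{−a} = a·x^a·` for `a > 0`, and `J₀ = 0`. -/
noncomputable def Jop (ℏ : ℂ) (a : ℤ) : Module.End ℂ (MvPolynomial ℕ ℂ) :=
  if 0 < a then ℏ • (MvPolynomial.pderiv (R := ℂ) a.toNat).toLinearMap
  else if a < 0 then
    LinearMap.mulLeft ℂ ((((-a : ℤ) : ℂ)) • MvPolynomial.X (-a).toNat)
  else 0

/-- The Grassmann algebra `Λ` on generators `θ⁰, θ¹, θ², ...`. -/
abbrev Grassmann : Type := ExteriorAlgebra ℂ (ℕ →₀ ℂ)

/-- The generator `θ^a`. -/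
noncomputable def theta (a : ℕ) : Grassmann :=
  ExteriorAlgebra.ι ℂ (Finsupp.single a (1 : ℂ))

/-- The Clifford operators on `Λ`: `Γ_a = ℏ·∂/∂θ^a` for `a > 0`, `Γ_{−a} = θ^a·` for `a > 0`,
and `Γ₀ = θ⁰/2 + ℏ·∂/∂θ⁰`. -/
noncomputable def Gop (ℏ : ℂ) (a : ℤ) : Module.End ℂ Grassmann :=
  if 0 < a then
    ℏ • (CliffordAlgebra.contractLeft (Q := (0 : QuadraticForm ℂ (ℕ →₀ ℂ)))
      (Finsupp.lapply a.toNat))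
  else if a < 0 then LinearMap.mulLeft ℂ (theta (-a).toNat)
  else
    (1 / 2 : ℂ) • LinearMap.mulLeft ℂ (theta 0) +
      ℏ • (CliffordAlgebra.contractLeft (Q := (0 : QuadraticForm ℂ (ℕ →₀ ℂ)))
        (Finsupp.lapply 0))

/-- The bosonic-fermionic Fock space `ℂ[x¹,x²,...] ⊗ Λ[θ⁰,θ¹,...]`. -/
abbrev Fock : Type := TensorProduct ℂ (MvPolynomial ℕ ℂ) Grassmann

/-- `J_a` acting on the Fock space (on the bosonic factor). -/
noncomputable def JT (ℏ : ℂ) (a : ℤ) : Module.End ℂ Fock :=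
  TensorProduct.map (Jop ℏ a) LinearMap.id

/-- `Γ_a` acting on the Fock space (on the fermionic factor; the bosonic factor is even so no
Koszul sign occurs). -/
noncomputable def GT (ℏ : ℂ) (a : ℤ) : Module.End ℂ Fock :=
  TensorProduct.map LinearMap.id (Gop ℏ a)

/-- Bosonic normal-ordered product `:J_a J_b:` (annihilation/positive modes to the right). -/
noncomputable def nJJ (ℏ : ℂ) (a b : ℤ) : Module.End ℂ Fock :=
  if a ≤ b then JT ℏ a ∘ₗ JT ℏ b else JT ℏ b ∘ₗ JT ℏ a

/-- Fermionic normal-ordered product `:Γ_a Γ_b:` (positive modes to the right, with a sign for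
the fermionic exchange). -/
noncomputable def nGG (ℏ : ℂ) (a b : ℤ) : Module.End ℂ Fock :=
  if a ≤ b then GT ℏ a ∘ₗ GT ℏ b else -(GT ℏ b ∘ₗ GT ℏ a)

/-- The operator `L_{2n} = ½Σ_j(−1)^{j−1}:J_{−j}J_{2n+j}: + (ℏ/4)δ_{n,0}
+ ½Σ_j(−1)^j(n+j):Γ_{−j}Γ_{j+2n}:`; the sums are locally finite, so they are formalized
pointwise via `finsum`. -/
noncomputable def Lfun (ℏ : ℂ) (n : ℤ) (v : Fock) : Fock :=
  (1 / 2 : ℂ) • (∑ᶠ j : ℤ, ((-1 : ℂ) ^ (j - 1)) • nJJ ℏ (-j) (2 * n + j) v) +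
    ((ℏ / 4) * (if n = 0 then 1 else 0)) • v +
    (1 / 2 : ℂ) • (∑ᶠ j : ℤ, (((-1 : ℂ) ^ j) * ((n : ℂ) + (j : ℂ))) • nGG ℏ (-j) (j + 2 * n) v)

/-- The operator `G_{2m+1} = Σ_j(−1)^{j−1}:J_{−j}Γ_{j+2m+1}:` (note `J`'s and `Γ`'s commute, so
the normal ordering of a mixed product is the product itself); formalized pointwise via
`finsum`. -/
noncomputable def Gfun (ℏ : ℂ) (m : ℤ) (v : Fock) : Fock :=
  ∑ᶠ j : ℤ, ((-1 : ℂ) ^ (j - 1)) • (JT ℏ (-j) ∘ₗ GT ℏ (j + 2 * m + 1)) v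

noncomputable abbrev Cop (k : ℕ) : Module.End ℂ Grassmann :=
  CliffordAlgebra.contractLeft (Q := (0 : QuadraticForm ℂ (ℕ →₀ ℂ))) (Finsupp.lapply k)

lemma Cop_theta_mul (k a : ℕ) (x : Grassmann) :
    Cop k (theta a * x) = (if a = k then (1:ℂ) else 0) • x - theta a * Cop k x := by
  rw [theta]
  rw [show (CliffordAlgebra.contractLeft (Q := (0 : QuadraticForm ℂ (ℕ →₀ ℂ)))
      (Finsupp.lapply k)) ((ExteriorAlgebra.ι ℂ) (Finsupp.single a (1:ℂ)) * x)
      = _ from CliffordAlgebra.contractLeft_ι_mul _ _ x]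
  simp [Finsupp.single_apply]

lemma Cop_anti (k l : ℕ) (x : Grassmann) : Cop k (Cop l x) = -(Cop l (Cop k x)) := by
  rw [CliffordAlgebra.contractLeft_comm]

lemma theta_theta_mul (a b : ℕ) (x : Grassmann) :
    theta a * (theta b * x) = -(theta b * (theta a * x)) := by
  rw [← mul_assoc, ← mul_assoc, ← neg_mul]
  congr 1
  have h : theta a * theta b + theta b * theta a = 0 := by
    rw [theta, theta, CliffordAlgebra.ι_mul_ι_add_swap]
    simp [QuadraticMap.polar]
  exact eq_neg_of_add_eq_zero_left h

lemma Gop_pos (ℏ : ℂ) {a : ℤ} (ha : 0 < a) : Gop ℏ a = ℏ • (Cop a.toNat : Module.End ℂ Grassmann) := by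
  rw [Gop, if_pos ha]

lemma Gop_neg (ℏ : ℂ) {a : ℤ} (ha : a < 0) :
    Gop ℏ a = LinearMap.mulLeft ℂ (theta (-a).toNat) := by
  rw [Gop, if_neg (by omega), if_pos ha]

lemma Gop_zero (ℏ : ℂ) : Gop ℏ 0 = (1 / 2 : ℂ) • LinearMap.mulLeft ℂ (theta 0) +
    ℏ • (Cop 0 : Module.End ℂ Grassmann) := by
  rw [Gop]; simp

lemma Gop_anticomm_le (ℏ : ℂ) (a b : ℤ) (hab : a ≤ b) (x : Grassmann) :
    Gop ℏ a (Gop ℏ b x) + Gop ℏ b (Gop ℏ a x) = (if a + b = 0 then ℏ else 0) • x := by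
  rcases lt_trichotomy 0 a with ha | ha | ha
  · -- 0 < a ≤ b
    have hb : 0 < b := lt_of_lt_of_le ha hab
    rw [Gop_pos ℏ ha, Gop_pos ℏ hb, if_neg (by omega : ¬ a + b = 0)]
    simp only [LinearMap.smul_apply, map_smul]
    rw [Cop_anti a.toNat b.toNat x]
    module
  · -- a = 0 ≤ b
    subst ha
    rcases eq_or_lt_of_le hab with hb | hb
    · -- b = 0
      subst hb
      rw [Gop_zero, if_pos (by ring : (0:ℤ) + 0 = 0)]
      simp only [LinearMap.add_apply,
        LinearMap.smul_apply, LinearMap.mulLeft_apply, map_add, map_smul, mul_add,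
        mul_smul_comm, smul_add, smul_smul]
      have h1 : theta 0 * (theta 0 * x) = 0 := by
        have h := theta_theta_mul 0 0 x
        have h2 : (2:ℂ) • (theta 0 * (theta 0 * x)) = 0 := by
          rw [two_smul]; nth_rewrite 1 [h]; abel
        simpa using h2
      have h2 : Cop 0 (Cop 0 x) = 0 := CliffordAlgebra.contractLeft_contractLeft _ _
      have h3 : Cop 0 (theta 0 * x) = x - theta 0 * Cop 0 x := by
        rw [Cop_theta_mul, if_pos rfl, one_smul]
      rw [h1, h2, h3]
      module
    · -- b > 0
      rw [Gop_zero, Gop_pos ℏ hb, if_neg (by omega : ¬ (0:ℤ) + b = 0)]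
      simp only [LinearMap.add_apply, LinearMap.smul_apply, LinearMap.mulLeft_apply,
        map_add, map_smul, mul_smul_comm]
      have h1 : Cop 0 (Cop b.toNat x) = -(Cop b.toNat (Cop 0 x)) := Cop_anti _ _ _
      have h2 : Cop b.toNat (theta 0 * x) = -(theta 0 * Cop b.toNat x) := by
        rw [Cop_theta_mul, if_neg (by omega), zero_smul, zero_sub]
      rw [h1, h2]
      module
  · -- a < 0
    rcases lt_trichotomy 0 b with hb | hb | hb
    · -- a < 0 < b
      rw [Gop_neg ℏ ha, Gop_pos ℏ hb]
      simp only [LinearMap.smul_apply, LinearMap.mulLeft_apply, map_smul, mul_smul_comm]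
      rw [Cop_theta_mul]
      have hiff : ((-a).toNat = b.toNat) ↔ (a + b = 0) := by omega
      simp only [hiff]
      split_ifs with h
      · module
      · module
    · -- b = 0
      subst hb
      rw [Gop_zero, Gop_neg ℏ ha, if_neg (by omega : ¬ a + 0 = 0)]
      simp only [LinearMap.add_apply, LinearMap.smul_apply, LinearMap.mulLeft_apply,
        map_add, map_smul, mul_add, mul_smul_comm]
      have h1 : theta (-a).toNat * (theta 0 * x) = -(theta 0 * (theta (-a).toNat * x)) :=
        theta_theta_mul _ _ _
      have h2 : Cop 0 (theta (-a).toNat * x) = -(theta (-a).toNat * Cop 0 x) := by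
        rw [Cop_theta_mul, if_neg (by omega), zero_smul, zero_sub]
      rw [h1, h2]
      module
    · -- b < 0
      rw [Gop_neg ℏ ha, Gop_neg ℏ hb, if_neg (by omega : ¬ a + b = 0)]
      simp only [LinearMap.mulLeft_apply]
      rw [theta_theta_mul]
      module

lemma Gop_anticomm (ℏ : ℂ) (a b : ℤ) (x : Grassmann) :
    Gop ℏ a (Gop ℏ b x) + Gop ℏ b (Gop ℏ a x) = (if a + b = 0 then ℏ else 0) • x := by
  rcases le_total a b with h | h
  · exact Gop_anticomm_le ℏ a b h x
  · rw [add_comm (Gop ℏ a (Gop ℏ b x)), show a + b = b + a from add_comm a b]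
    exact Gop_anticomm_le ℏ b a h x
-- tensor-level lemmas
lemma GT_anticomm (ℏ : ℂ) (a b : ℤ) (v : Fock) :
    GT ℏ a (GT ℏ b v) + GT ℏ b (GT ℏ a v) = (if a + b = 0 then ℏ else 0) • v := by
  induction v using TensorProduct.induction_on with
  | zero => simp
  | tmul p g =>
    simp only [GT, TensorProduct.map_tmul, LinearMap.id_coe, id_eq]
    rw [← TensorProduct.tmul_add, Gop_anticomm, TensorProduct.tmul_smul]
  | add x y hx hy =>
    simp only [map_add] at *
    rw [smul_add, ← hx, ← hy]; abel

lemma JT_GT_comm (ℏ : ℂ) (a c : ℤ) (v : Fock) :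
    JT ℏ a (GT ℏ c v) = GT ℏ c (JT ℏ a v) := by
  have h : JT ℏ a ∘ₗ GT ℏ c = GT ℏ c ∘ₗ JT ℏ a := by
    rw [JT, GT, ← TensorProduct.map_comp, ← TensorProduct.map_comp,
      LinearMap.comp_id, LinearMap.id_comp, LinearMap.comp_id, LinearMap.id_comp]
  exact congrFun (congrArg (fun f => f.toFun) h) v

lemma nJJ_GT_comm (ℏ : ℂ) (a b c : ℤ) (v : Fock) :
    nJJ ℏ a b (GT ℏ c v) = GT ℏ c (nJJ ℏ a b v) := by
  rw [nJJ]; split_ifs with h <;>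
    simp only [LinearMap.comp_apply, JT_GT_comm]

lemma nGG_comm (ℏ : ℂ) (a b c : ℤ) (v : Fock) :
    nGG ℏ a b (GT ℏ c v) - GT ℏ c (nGG ℏ a b v)
      = (if b + c = 0 then ℏ else 0) • GT ℏ a v - (if a + c = 0 then ℏ else 0) • GT ℏ b v := by
  by_cases h : a ≤ b
  · rw [nGG, if_pos h]
    simp only [LinearMap.comp_apply]
    rw [eq_sub_of_add_eq (GT_anticomm ℏ b c v), map_sub, map_smul,
      eq_sub_of_add_eq (GT_anticomm ℏ a c (GT ℏ b v))]
    abel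
  · rw [nGG, if_neg h]
    simp only [LinearMap.neg_apply, LinearMap.comp_apply, map_neg]
    rw [eq_sub_of_add_eq (GT_anticomm ℏ a c v), map_sub, map_smul,
      eq_sub_of_add_eq (GT_anticomm ℏ b c (GT ℏ a v))]
    abel

-- annihilation lemmas
lemma poly_ann (p : MvPolynomial ℕ ℂ) :
    ∃ N : ℕ, ∀ k, N ≤ k → MvPolynomial.pderiv (R := ℂ) k p = 0 := by
  refine ⟨p.vars.sup id + 1, fun k hk => MvPolynomial.pderiv_eq_zero_of_notMem_vars fun hmem => ?_⟩
  have := Finset.le_sup (f := id) hmem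
  simp only [id_eq] at this
  omega

lemma grass_ann (g : Grassmann) : ∃ N : ℕ, ∀ k, N ≤ k → Cop k g = 0 := by
  induction g using CliffordAlgebra.left_induction with
  | algebraMap r => exact ⟨0, fun k _ => CliffordAlgebra.contractLeft_algebraMap _ _ _⟩
  | add x y hx hy =>
    obtain ⟨N1, h1⟩ := hx; obtain ⟨N2, h2⟩ := hy
    exact ⟨max N1 N2, fun k hk => by
      rw [map_add, h1 k (le_trans (le_max_left _ _) hk), h2 k (le_trans (le_max_right _ _) hk),
        add_zero]⟩
  | ι_mul x m hx =>
    obtain ⟨N, h⟩ := hx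
    refine ⟨max N (m.support.sup id + 1), fun k hk => ?_⟩
    rw [show (Cop k) ((CliffordAlgebra.ι (0 : QuadraticForm ℂ (ℕ →₀ ℂ))) m * x)
      = (Finsupp.lapply k) m • x - (CliffordAlgebra.ι 0) m * Cop k x from
        CliffordAlgebra.contractLeft_ι_mul _ _ x]
    rw [h k (le_trans (le_max_left _ _) hk), mul_zero, sub_zero]
    have hm : m k = 0 := by
      by_contra hne
      have hmem : k ∈ m.support := Finsupp.mem_support_iff.mpr hne
      have := Finset.le_sup (f := id) hmem
      simp only [id_eq] at this
      omega
    simp [Finsupp.lapply_apply, hm]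

lemma fock_ann (ℏ : ℂ) (v : Fock) :
    ∃ N : ℕ, ∀ a : ℤ, (N : ℤ) ≤ a → JT ℏ a v = 0 ∧ GT ℏ a v = 0 := by
  induction v using TensorProduct.induction_on with
  | zero => exact ⟨1, fun a _ => by simp⟩
  | tmul p g =>
    obtain ⟨N1, h1⟩ := poly_ann p
    obtain ⟨N2, h2⟩ := grass_ann g
    refine ⟨N1 + N2 + 1, fun a ha => ?_⟩
    have hpos : 0 < a := by omega
    constructor
    · rw [JT, TensorProduct.map_tmul, Jop, if_pos hpos]
      have : MvPolynomial.pderiv (R := ℂ) a.toNat p = 0 := h1 a.toNat (by omega)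
      simp [this]
    · rw [GT, TensorProduct.map_tmul, Gop_pos ℏ hpos]
      have : Cop a.toNat g = 0 := h2 a.toNat (by omega)
      simp [this]
  | add x y hx hy =>
    obtain ⟨N1, h1⟩ := hx; obtain ⟨N2, h2⟩ := hy
    refine ⟨max N1 N2, fun a ha => ?_⟩
    have e1 := h1 a (by omega); have e2 := h2 a (by omega)
    constructor
    · rw [map_add, e1.1, e2.1, add_zero]
    · rw [map_add, e1.2, e2.2, add_zero]

-- support finiteness
lemma supp_nJJ (ℏ : ℂ) (n : ℤ) (v : Fock) :
    (Function.support fun j : ℤ => nJJ ℏ (-j) (2 * n + j) v).Finite := by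
  obtain ⟨N, hN⟩ := fock_ann ℏ v
  apply Set.Finite.subset (Set.finite_Icc (min (-(N:ℤ)) (-n)) (max ((N:ℤ) - 2*n) (-n)))
  rw [Function.support_subset_iff']
  intro j hj
  simp only [Set.mem_Icc, not_and_or, not_le] at hj
  rw [nJJ]
  split_ifs with h
  · have hb : (N:ℤ) ≤ 2 * n + j := by omega
    rw [LinearMap.comp_apply, (hN _ hb).1, map_zero]
  · have hb : (N:ℤ) ≤ -j := by omega
    rw [LinearMap.comp_apply, (hN _ hb).1, map_zero]

lemma supp_nGG (ℏ : ℂ) (n : ℤ) (v : Fock) :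
    (Function.support fun j : ℤ => nGG ℏ (-j) (j + 2 * n) v).Finite := by
  obtain ⟨N, hN⟩ := fock_ann ℏ v
  apply Set.Finite.subset (Set.finite_Icc (min (-(N:ℤ)) (-n)) (max ((N:ℤ) - 2*n) (-n)))
  rw [Function.support_subset_iff']
  intro j hj
  simp only [Set.mem_Icc, not_and_or, not_le] at hj
  rw [nGG]
  split_ifs with h
  · have hb : (N:ℤ) ≤ j + 2 * n := by omega
    rw [LinearMap.comp_apply, (hN _ hb).2, map_zero]
  · have hb : (N:ℤ) ≤ -j := by omega
    rw [LinearMap.neg_apply, LinearMap.comp_apply, (hN _ hb).2, map_zero, neg_zero]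

lemma neg_one_zpow_odd {j : ℤ} (h : Odd j) : (-1 : ℂ) ^ j = -1 := by
  obtain ⟨k, rfl⟩ := h
  rw [zpow_add₀ (by norm_num : (-1:ℂ) ≠ 0), Even.neg_one_zpow ⟨k, (two_mul k)⟩]
  simp
lemma supp_smul {f : ℤ → Fock} (hf : (Function.support f).Finite) (cfn : ℤ → ℂ) :
    (Function.support fun j => cfn j • f j).Finite := by
  refine hf.subset fun j hj => ?_
  simp only [Function.mem_support] at *
  intro h; exact hj (by rw [h, smul_zero])

/-- `[L_{2n}, Γ_{2i−1}] = (n + 2i − 1)·ℏ·Γ_{2n+2i−1}` for `n ≥ −1`, `i ≥ 1`. -/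
theorem stmt14 (ℏ : ℂ) (n : ℤ) (hn : -1 ≤ n) (i : ℤ) (hi : 1 ≤ i) (v : Fock) :
    Lfun ℏ n (GT ℏ (2 * i - 1) v) - GT ℏ (2 * i - 1) (Lfun ℏ n v) =
      (((n : ℂ) + 2 * (i : ℂ) - 1) * ℏ) • GT ℏ (2 * n + 2 * i - 1) v := by
  -- J part passes through
  have hsJ : (Function.support fun j : ℤ => ((-1:ℂ) ^ (j-1)) • nJJ ℏ (-j) (2*n+j) v).Finite :=
    supp_smul (supp_nJJ ℏ n v) _
  have hJ : GT ℏ (2*i-1) (∑ᶠ j : ℤ, ((-1:ℂ) ^ (j-1)) • nJJ ℏ (-j) (2*n+j) v)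
      = ∑ᶠ j : ℤ, ((-1:ℂ) ^ (j-1)) • nJJ ℏ (-j) (2*n+j) (GT ℏ (2*i-1) v) := by
    have h := AddMonoidHom.map_finsum (GT ℏ (2*i-1)).toAddMonoidHom
      (f := fun j : ℤ => ((-1:ℂ) ^ (j-1)) • nJJ ℏ (-j) (2*n+j) v) hsJ
    simp only [LinearMap.toAddMonoidHom_coe] at h
    rw [h]
    exact finsum_congr fun j => by rw [map_smul, ← nJJ_GT_comm]
  -- fermionic part
  have hsGv : (Function.support fun j : ℤ =>
      (((-1:ℂ) ^ j) * ((n:ℂ) + (j:ℂ))) • nGG ℏ (-j) (j + 2*n) v).Finite :=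
    supp_smul (supp_nGG ℏ n v) _
  have hsGv' : (Function.support fun j : ℤ =>
      (((-1:ℂ) ^ j) * ((n:ℂ) + (j:ℂ))) • nGG ℏ (-j) (j + 2*n) (GT ℏ (2*i-1) v)).Finite :=
    supp_smul (supp_nGG ℏ n (GT ℏ (2*i-1) v)) _
  have hsGc : (Function.support fun j : ℤ =>
      (((-1:ℂ) ^ j) * ((n:ℂ) + (j:ℂ))) • GT ℏ (2*i-1) (nGG ℏ (-j) (j + 2*n) v)).Finite := by
    refine (supp_nGG ℏ n v).subset fun j hj => ?_
    simp only [Function.mem_support] at *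
    intro h; exact hj (by rw [h, map_zero, smul_zero])
  have hG : (∑ᶠ j : ℤ, (((-1:ℂ) ^ j) * ((n:ℂ) + (j:ℂ))) • nGG ℏ (-j) (j + 2*n) (GT ℏ (2*i-1) v))
      - GT ℏ (2*i-1) (∑ᶠ j : ℤ, (((-1:ℂ) ^ j) * ((n:ℂ) + (j:ℂ))) • nGG ℏ (-j) (j + 2*n) v)
      = (2 * ((n:ℂ) + 2*(i:ℂ) - 1) * ℏ) • GT ℏ (2*n + 2*i - 1) v := by
    have h := AddMonoidHom.map_finsum (GT ℏ (2*i-1)).toAddMonoidHom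
      (f := fun j : ℤ => (((-1:ℂ) ^ j) * ((n:ℂ) + (j:ℂ))) • nGG ℏ (-j) (j + 2*n) v) hsGv
    simp only [LinearMap.toAddMonoidHom_coe] at h
    rw [h]
    have h2 : ∀ j : ℤ, GT ℏ (2*i-1) ((((-1:ℂ) ^ j) * ((n:ℂ) + (j:ℂ))) • nGG ℏ (-j) (j + 2*n) v)
        = (((-1:ℂ) ^ j) * ((n:ℂ) + (j:ℂ))) • GT ℏ (2*i-1) (nGG ℏ (-j) (j + 2*n) v) :=
      fun j => map_smul _ _ _
    rw [finsum_congr h2, ← finsum_sub_distrib hsGv' hsGc]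
    have h3 : ∀ j : ℤ,
        (((-1:ℂ) ^ j) * ((n:ℂ) + (j:ℂ))) • nGG ℏ (-j) (j + 2*n) (GT ℏ (2*i-1) v)
          - (((-1:ℂ) ^ j) * ((n:ℂ) + (j:ℂ))) • GT ℏ (2*i-1) (nGG ℏ (-j) (j + 2*n) v)
        = ((((-1:ℂ) ^ j) * ((n:ℂ) + (j:ℂ))) •
            ((if j + 2*n + (2*i-1) = 0 then ℏ else 0) • GT ℏ (-j) v))
          - ((((-1:ℂ) ^ j) * ((n:ℂ) + (j:ℂ))) •
            ((if -j + (2*i-1) = 0 then ℏ else 0) • GT ℏ (j + 2*n) v)) := by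
      intro j
      calc (((-1:ℂ) ^ j) * ((n:ℂ) + (j:ℂ))) • nGG ℏ (-j) (j + 2*n) (GT ℏ (2*i-1) v)
            - (((-1:ℂ) ^ j) * ((n:ℂ) + (j:ℂ))) • GT ℏ (2*i-1) (nGG ℏ (-j) (j + 2*n) v)
          = (((-1:ℂ) ^ j) * ((n:ℂ) + (j:ℂ))) • (nGG ℏ (-j) (j + 2*n) (GT ℏ (2*i-1) v)
              - GT ℏ (2*i-1) (nGG ℏ (-j) (j + 2*n) v)) := (smul_sub _ _ _).symm
        _ = _ := by rw [nGG_comm, smul_sub]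
    rw [finsum_congr h3]
    have hu : (Function.support fun j : ℤ => (((-1:ℂ) ^ j) * ((n:ℂ) + (j:ℂ))) •
        ((if j + 2*n + (2*i-1) = 0 then ℏ else 0) • GT ℏ (-j) v)).Finite := by
      refine (Set.finite_singleton (1 - 2*n - 2*i)).subset fun j hj => ?_
      simp only [Function.mem_support, Set.mem_singleton_iff] at *
      by_contra hne
      exact hj (by rw [if_neg (by omega), zero_smul, smul_zero])
    have hw : (Function.support fun j : ℤ => (((-1:ℂ) ^ j) * ((n:ℂ) + (j:ℂ))) •
        ((if -j + (2*i-1) = 0 then ℏ else 0) • GT ℏ (j + 2*n) v)).Finite := by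
      refine (Set.finite_singleton (2*i-1)).subset fun j hj => ?_
      simp only [Function.mem_support, Set.mem_singleton_iff] at *
      by_contra hne
      exact hj (by rw [if_neg (by omega), zero_smul, smul_zero])
    rw [finsum_sub_distrib hu hw,
      finsum_eq_single _ (1 - 2*n - 2*i)
        (fun j hj => by rw [if_neg (by omega), zero_smul, smul_zero]),
      finsum_eq_single _ (2*i - 1)
        (fun j hj => by rw [if_neg (by omega), zero_smul, smul_zero])]
    beta_reduce
    rw [if_pos (show 1 - 2*n - 2*i + 2*n + (2*i-1) = 0 from by ring),
      if_pos (show -(2*i-1) + (2*i-1) = 0 from by ring),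
      show -(1 - 2*n - 2*i) = 2*n + 2*i - 1 from by ring,
      show (2*i - 1) + 2*n = 2*n + 2*i - 1 from by ring,
      neg_one_zpow_odd (⟨-n - i, by ring⟩ : Odd (1 - 2*n - 2*i)),
      neg_one_zpow_odd (⟨i - 1, by ring⟩ : Odd (2*i - 1))]
    push_cast
    module
  -- assemble
  rw [Lfun, Lfun, map_add, map_add, map_smul, map_smul, map_smul, hJ,
    sub_eq_iff_eq_add.mp hG]
  module
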